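/- arXiv:1407.1200 — 2 statements merged into one kernel-verified Lean document; each statement's English description precedes it below -/
import Mathlib

section
/- If k₁,…,k_d ∈ ℕ and (x₁,…,x_d) ∈ [k₁−1,k₁) × ⋯ × [k_d−1,k_d), then H^⊞(x₁,…,x_d) = ∑_{S ⊆ {1,…,d}} H(k_{S₁},…,k_{S_d}) · {∏_{ℓ∉S} (k_ℓ − x_ℓ)} · {∏_{ℓ∈S} (x_ℓ − k_ℓ + 1)}, where k_{S_j} = k_j if j ∈ S and k_{S_j} = k_j − 1 otherwise. -/
/-!
Since `X` is integer-valued, `H y` only depends on the integer parts `⌊y j⌋`. For `x` in the cell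
and `u ∈ [0,1]^d`, `⌊x j + u j⌋` is `k j` or `k j - 1` according as `u j ≥ k j - x j` or not, so
`u ↦ H (x + u)` is a step function on the unit cube, constant on the boxes cut out by the
thresholds `k j - x j`. Its integral is the sum of its values `H (k_S)` weighted by the volumes
`∏_{ℓ ∉ S} (k ℓ - x ℓ) ∏_{ℓ ∈ S} (x ℓ - k ℓ + 1)` of these boxes.
-/

open MeasureTheory Filter Topology

noncomputable section

/-- Generalized inverse `F⁻¹(u) = inf {x | F x ≥ u}` of a distribution function,
with the convention `F⁻¹ 0 = -1`. -/
def genInv (F : ℝ → ℝ) (u : ℝ) : ℝ :=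
  if u = 0 then -1 else sInf {x : ℝ | u ≤ F x}

/-- Multilinear extension `F^⊞(x) = ∫₀¹ F (x + u) du` of a univariate distribution function. -/
def mlin1 (F : ℝ → ℝ) (x : ℝ) : ℝ := ∫ u in Set.Icc (0:ℝ) 1, F (x + u)

/-- Multilinear extension `H^⊞(x) = ∫_{[0,1]^d} H (x + u) du` of a `d`-variate
distribution function. -/
def mlin (d : ℕ) (H : (Fin d → ℝ) → ℝ) (x : Fin d → ℝ) : ℝ :=
  ∫ u in Set.Icc (0 : Fin d → ℝ) 1, H (x + u)

/-- The multilinear extension copula `C^⊞(u) = H^⊞(F₁^⊞⁻¹(u₁),…,F_d^⊞⁻¹(u_d))`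
of `H` with margins `F`. -/
def mlinCopula (d : ℕ) (H : (Fin d → ℝ) → ℝ) (F : Fin d → ℝ → ℝ) (u : Fin d → ℝ) : ℝ :=
  mlin d H (fun j => genInv (mlin1 (F j)) (u j))

section ThresholdSet

variable {ι : Type*} [Fintype ι] [DecidableEq ι]

def thresholdSet (c u : ι → ℝ) : Finset ι := {j | c j ≤ u j}

lemma setOf_thresholdSet_eq (c : ι → ℝ) (S : Finset ι) :
    {u | thresholdSet c u = S} =
      Set.univ.pi fun j => if j ∈ S then Set.Ici (c j) else Set.Iio (c j) := by
  ext u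
  simp only [Set.mem_ofPred_eq, Set.mem_univ_pi, Finset.ext_iff, thresholdSet,
    Finset.mem_filter, Finset.mem_univ, true_and]
  refine forall_congr' fun j => ?_
  split_ifs with hj <;> simp [hj]

lemma measurableSet_setOf_thresholdSet (c : ι → ℝ) (S : Finset ι) :
    MeasurableSet {u | thresholdSet c u = S} := by
  rw [setOf_thresholdSet_eq]
  exact .univ_pi fun j => by split_ifs <;> measurability

lemma volume_real_setOf_thresholdSet_inter_unitCube {c : ι → ℝ} (hc0 : 0 ≤ c) (hc1 : c ≤ 1)
    (S : Finset ι) :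
    volume.real ({u | thresholdSet c u = S} ∩ Set.Icc 0 1) =
      (∏ j ∈ Sᶜ, c j) * ∏ j ∈ S, (1 - c j) := by
  have hbox : {u | thresholdSet c u = S} ∩ Set.Icc 0 1 =
      Set.univ.pi fun j => if j ∈ S then Set.Icc (c j) 1 else Set.Ico 0 (c j) := by
    rw [setOf_thresholdSet_eq, ← Set.pi_univ_Icc, ← Set.pi_inter_distrib]
    refine Set.pi_congr rfl fun j _ => Set.ext fun t => ?_
    split_ifs
    · exact ⟨fun ⟨h₁, _, h₂⟩ => ⟨h₁, h₂⟩, fun ⟨h₁, h₂⟩ => ⟨h₁, (hc0 j).trans h₁, h₂⟩⟩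
    · exact ⟨fun ⟨h₁, h₂, _⟩ => ⟨h₂, h₁⟩, fun ⟨h₁, h₂⟩ => ⟨h₂, h₁, h₂.le.trans (hc1 j)⟩⟩
  rw [hbox, measureReal_def, volume_pi_pi, ENNReal.toReal_prod,
    ← Finset.prod_mul_prod_compl S, mul_comm]
  congr 1 <;> refine Finset.prod_congr rfl fun j hj => ?_
  · rw [if_neg (Finset.mem_compl.1 hj), Real.volume_Ico, sub_zero,
      ENNReal.toReal_ofReal (hc0 j)]
  · rw [if_pos hj, Real.volume_Icc, ENNReal.toReal_ofReal (sub_nonneg.2 (hc1 j) : 0 ≤ 1 - c j)]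

variable {E : Type*} [NormedAddCommGroup E] [NormedSpace ℝ E] [CompleteSpace E]

theorem setIntegral_unitCube_comp_thresholdSet (f : Finset ι → E) {c : ι → ℝ}
    (hc0 : 0 ≤ c) (hc1 : c ≤ 1) :
    ∫ u in Set.Icc 0 1, f (thresholdSet c u) =
      ∑ S, ((∏ j ∈ Sᶜ, c j) * ∏ j ∈ S, (1 - c j)) • f S := by
  have hmeas := measurableSet_setOf_thresholdSet c
  have hsplit : (fun u => f (thresholdSet c u)) =
      fun u => ∑ S, {u | thresholdSet c u = S}.indicator (fun _ => f S) u := by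
    ext u
    rw [Finset.sum_eq_single (thresholdSet c u)]
    · exact (Set.indicator_of_mem rfl _).symm
    · exact fun S _ hS => Set.indicator_of_notMem (Ne.symm hS) _
    · simp
  have hfin : volume (Set.Icc (0 : ι → ℝ) 1) ≠ ⊤ := isCompact_Icc.measure_lt_top.ne
  have hint (S : Finset ι) : IntegrableOn ({u | thresholdSet c u = S}.indicator fun _ => f S)
      (Set.Icc 0 1) :=
    (integrableOn_const hfin).indicator (hmeas S)
  rw [hsplit, integral_finsetSum _ fun S _ => hint S]
  refine Finset.sum_congr rfl fun S _ => ?_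
  rw [integral_indicator_const _ (hmeas S), measureReal_restrict_apply (hmeas S),
    volume_real_setOf_thresholdSet_inter_unitCube hc0 hc1]

end ThresholdSet

lemma setOf_forall_le_congr_floor {Ω ι : Type*} {X : Ω → ι → ℝ}
    (hX : ∀ ω j, ∃ n : ℤ, X ω j = n) {y y' : ι → ℝ} (h : ∀ j, ⌊y j⌋ = ⌊y' j⌋) :
    {ω | ∀ j, X ω j ≤ y j} = {ω | ∀ j, X ω j ≤ y' j} := by
  ext ω
  refine forall_congr' fun j => ?_
  obtain ⟨n, hn⟩ := hX ω j
  rw [hn, ← Int.le_floor, h j, Int.le_floor]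

lemma Int.floor_add_eq_ite {k : ℤ} {x u : ℝ} (hx₁ : k - 1 ≤ x) (hx₂ : x < k) (hu₀ : 0 ≤ u)
    (hu₁ : u ≤ 1) : ⌊x + u⌋ = if k - x ≤ u then k else k - 1 := by
  rw [Int.floor_eq_iff]
  split_ifs <;> push_cast <;> constructor <;> linarith

theorem multilinear_extension_cell_formula_general
    {Ω : Type*} [MeasurableSpace Ω] (P : Measure Ω)
    (d : ℕ) (X : Ω → Fin d → ℝ)
    (hNat : ∀ ω j, ∃ k : ℕ, X ω j = k)
    (H : (Fin d → ℝ) → ℝ)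
    (hH : ∀ x, H x = (P {ω | ∀ j, X ω j ≤ x j}).toReal)
    (k : Fin d → ℕ) (x : Fin d → ℝ)
    (hx : ∀ j, (k j : ℝ) - 1 ≤ x j ∧ x j < k j) :
    mlin d H x
      = ∑ S : Finset (Fin d),
          H (fun j => if j ∈ S then (k j : ℝ) else (k j : ℝ) - 1)
            * (∏ ℓ ∈ Sᶜ, ((k ℓ : ℝ) - x ℓ))
            * (∏ ℓ ∈ S, (x ℓ - (k ℓ : ℝ) + 1)) := by
  set c : Fin d → ℝ := fun j => k j - x j
  have hc0 : 0 ≤ c := fun j => sub_nonneg.2 (hx j).2.le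
  have hc1 : c ≤ 1 := fun j => by simp only [c, Pi.one_apply]; linarith [(hx j).1]
  have hInt : ∀ ω j, ∃ n : ℤ, X ω j = n := fun ω j =>
    let ⟨n, hn⟩ := hNat ω j; ⟨n, by rw [hn, Int.cast_natCast]⟩
  have hpattern : ∀ u ∈ Set.Icc 0 1, H (x + u) =
      H (fun j => if j ∈ thresholdSet c u then (k j : ℝ) else (k j : ℝ) - 1) := by
    rintro u ⟨hu₀, hu₁⟩
    rw [hH, hH, setOf_forall_le_congr_floor hInt]
    intro j
    have hfloor := Int.floor_add_eq_ite (k := k j) (by exact_mod_cast (hx j).1)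
      (by exact_mod_cast (hx j).2) (hu₀ j) (hu₁ j)
    simp only [Pi.add_apply, hfloor, thresholdSet, Finset.mem_filter, Finset.mem_univ,
      true_and, c, Int.cast_natCast]
    split_ifs <;> simp
  rw [mlin, setIntegral_congr_fun measurableSet_Icc hpattern,
    setIntegral_unitCube_comp_thresholdSet
      (fun S => H fun j => if j ∈ S then (k j : ℝ) else (k j : ℝ) - 1) hc0 hc1]
  refine Finset.sum_congr rfl fun S _ => ?_
  rw [smul_eq_mul, Finset.prod_congr rfl fun ℓ _ => (by ring : 1 - c ℓ = x ℓ - k ℓ + 1)]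
  ring

/-- explicit multilinear form of `H^⊞` on the cell
`[k₁−1,k₁) × ⋯ × [k_d−1,k_d)`:
`H^⊞(x) = ∑_{S ⊆ {1,…,d}} H(k_S) ∏_{ℓ∉S}(k_ℓ − x_ℓ) ∏_{ℓ∈S}(x_ℓ − k_ℓ + 1)`,
where `k_{S_j} = k_j` if `j ∈ S` and `k_{S_j} = k_j − 1` otherwise. -/
theorem multilinear_extension_cell_formula
    {Ω : Type*} [MeasurableSpace Ω] (P : Measure Ω) [IsProbabilityMeasure P]
    (d : ℕ) (hd : 1 ≤ d) (X : Ω → Fin d → ℝ) (hX : Measurable X)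
    (hNat : ∀ ω j, ∃ k : ℕ, X ω j = k)
    (H : (Fin d → ℝ) → ℝ)
    (hH : ∀ x, H x = (P {ω | ∀ j, X ω j ≤ x j}).toReal)
    (k : Fin d → ℕ) (x : Fin d → ℝ)
    (hx : ∀ j, (k j : ℝ) - 1 ≤ x j ∧ x j < k j) :
    mlin d H x
      = ∑ S : Finset (Fin d),
          H (fun j => if j ∈ S then (k j : ℝ) else (k j : ℝ) - 1)
            * (∏ ℓ ∈ Sᶜ, ((k ℓ : ℝ) - x ℓ))
            * (∏ ℓ ∈ S, (x ℓ - (k ℓ : ℝ) + 1)) :=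
  multilinear_extension_cell_formula_general P d X hNat H hH k x hx
end
end

section
/- Let k₁,…,k_d ∈ ℕ with ΔF_j(k_j) > 0 for all j, and let (u₁,…,u_d), (v₁,…,v_d) be such that u_j, v_j ∈ (F_j(k_j−1), F_j(k_j)) for every j ∈ {1,…,d}. For m ∈ {1,…,d} define Ċ_m^⊞(w₁,…,w_d) = ∑_{S ⊆ {1,…,d}} H(k_{S₁},…,k_{S_d}) · (−1)^{1−s_m}/ΔF_m(k_m) · ∏_{ℓ∉S, ℓ≠m} {(F_ℓ(k_ℓ) − w_ℓ)/ΔF_ℓ(k_ℓ)} · ∏_{ℓ∈S, ℓ≠m} {(w_ℓ − F_ℓ(k_ℓ−1))/ΔF_ℓ(k_ℓ)}, where s_m = 1 if m ∈ S and s_m = 0 otherwise, and k_{S_j} = k_j if j ∈ S, k_{S_j} = k_j − 1 otherwise. Then C^⊞(v₁,…,v_d) − C^⊞(u₁,…,u_d) = ∑_{m=1}^d (v_m − u_m) · Ċ_m^⊞(w_{m1},…,w_{md}), where w_{mj} = u_j if j < m and w_{mj} = v_j if j ≥ m. -/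
open MeasureTheory Filter Topology

noncomputable section

/-- The partial derivative `Ċ_m^⊞` of the multilinear extension copula on the open cell
indexed by `k = (k₁,…,k_d)`:
`Ċ_m^⊞(w) = ∑_{S} H(k_S) (−1)^{1−s_m}/ΔF_m(k_m) ∏_{ℓ∉S,ℓ≠m} (F_ℓ(k_ℓ)−w_ℓ)/ΔF_ℓ(k_ℓ)
∏_{ℓ∈S,ℓ≠m} (w_ℓ−F_ℓ(k_ℓ−1))/ΔF_ℓ(k_ℓ)`. -/
def Cdot (d : ℕ) (H : (Fin d → ℝ) → ℝ) (F : Fin d → ℝ → ℝ) (k : Fin d → ℕ)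
    (m : Fin d) (w : Fin d → ℝ) : ℝ :=
  ∑ S : Finset (Fin d),
    H (fun j => if j ∈ S then (k j : ℝ) else (k j : ℝ) - 1)
      * ((-1 : ℝ) ^ ((1 : ℕ) - if m ∈ S then 1 else 0)
          / (F m (k m) - F m ((k m : ℝ) - 1)))
      * (∏ ℓ ∈ Finset.univ.filter (fun ℓ => ℓ ∉ S ∧ ℓ ≠ m),
          (F ℓ (k ℓ) - w ℓ) / (F ℓ (k ℓ) - F ℓ ((k ℓ : ℝ) - 1)))
      * (∏ ℓ ∈ S.filter (fun ℓ => ℓ ≠ m),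
          (w ℓ - F ℓ ((k ℓ : ℝ) - 1)) / (F ℓ (k ℓ) - F ℓ ((k ℓ : ℝ) - 1)))

/-!
On the cell, `F_j^⊞` interpolates `F_j` linearly between `k_j - 1` and `k_j`, so its generalized
inverse is affine in `u_j`; and since `H` is constant on the unit cubes `⌊y⌋ = const`, `H^⊞` at a
point of the cube `∏ [k_j - 1, k_j)` is the multilinear interpolation of `H` at the `2^d` corners
(the integral over `[0,1]^d` factors coordinatewise). Hence `C^⊞` is multi-affine on the cell, and
the increment telescopes one coordinate at a time, each step contributing the slope `Ċ_m^⊞`.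
-/

theorem natCast_le_floor_iff (n : ℕ) (y : ℝ) : (n : ℝ) ≤ (⌊y⌋ : ℝ) ↔ (n : ℝ) ≤ y := by
  exact_mod_cast Int.le_floor (z := n) (a := y)

theorem floor_add_eq_ite {k : ℤ} {x t : ℝ} (hx : x ∈ Set.Ico ((k : ℝ) - 1) k)
    (ht : t ∈ Set.Icc (0 : ℝ) 1) :
    (⌊x + t⌋ : ℝ) = if (k : ℝ) - x ≤ t then (k : ℝ) else (k : ℝ) - 1 := by
  obtain ⟨hx1, hx2⟩ := hx
  obtain ⟨ht1, ht2⟩ := ht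
  split_ifs with h
  · rw [Int.floor_eq_iff.2 ⟨by linarith, by linarith⟩]
  · rw [not_le] at h
    rw [(Int.floor_eq_iff (z := k - 1)).2 ⟨by push_cast; linarith, by push_cast; linarith⟩]
    push_cast; ring

theorem integrable_ite_le {μ : Measure ℝ} [IsFiniteMeasure μ] (c a b : ℝ) :
    Integrable (fun t : ℝ => if c ≤ t then a else b) μ :=
  Integrable.piecewise (s := Set.Ici c) measurableSet_Ici integrableOn_const integrableOn_const

theorem integral_Icc_ite_le {c : ℝ} (hc : c ∈ Set.Icc (0 : ℝ) 1) (a b : ℝ) :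
    ∫ t in Set.Icc (0 : ℝ) 1, (if c ≤ t then a else b) = (1 - c) * a + c * b := by
  have hdisj : Disjoint (Set.Ico 0 c) (Set.Icc c 1) :=
    Set.disjoint_left.2 fun t h1 h2 => (not_le.2 h1.2) h2.1
  rw [← Set.Ico_union_Icc_eq_Icc hc.1 hc.2, setIntegral_union hdisj measurableSet_Icc
      (integrable_ite_le _ _ _) (integrable_ite_le _ _ _),
    setIntegral_congr_fun measurableSet_Ico (g := fun _ => b) fun t ht => if_neg (not_le.2 ht.2),
    setIntegral_congr_fun measurableSet_Icc (g := fun _ => a) fun t ht => if_pos ht.1,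
    setIntegral_const, setIntegral_const, Real.volume_real_Ico_of_le hc.1,
    Real.volume_real_Icc_of_le hc.2]
  simp only [smul_eq_mul]
  ring

theorem volume_restrict_Icc_pi {ι : Type*} [Fintype ι] (a b : ι → ℝ) :
    volume.restrict (Set.Icc a b) = Measure.pi fun i => volume.restrict (Set.Icc (a i) (b i)) := by
  rw [← Set.pi_univ_Icc, volume_pi, Measure.restrict_pi_pi]

theorem prod_ite_mem_eq_ite_eq {ι R : Type*} [Fintype ι] [DecidableEq ι] [CommSemiring R]
    (p : ι → Prop) [DecidablePred p] (S : Finset ι) :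
    ∏ j, (if p j then (if j ∈ S then 1 else 0) else (if j ∈ S then 0 else 1) : R)
      = if S = Finset.univ.filter p then 1 else 0 := by
  have h : ∀ j, (if p j then (if j ∈ S then 1 else 0) else (if j ∈ S then 0 else 1) : R)
      = if (j ∈ S ↔ p j) then 1 else 0 := fun j => by
    by_cases hp : p j <;> by_cases hS : j ∈ S <;> simp [hp, hS]
  simp only [h, Finset.prod_boole, Finset.mem_univ, true_implies, Finset.ext_iff,
    Finset.mem_filter, true_and]

theorem mlin1_eq_of_mem_Ico {G : ℝ → ℝ} (hG : ∀ y, G y = G ⌊y⌋) {k : ℤ} {x : ℝ}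
    (hx : x ∈ Set.Ico ((k : ℝ) - 1) k) :
    mlin1 G x = G (k - 1) + (x - (k - 1)) * (G k - G (k - 1)) := by
  rw [mlin1, setIntegral_congr_fun measurableSet_Icc fun t ht => by
      rw [hG, floor_add_eq_ite hx ht, apply_ite G],
    integral_Icc_ite_le ⟨by linarith [hx.2], by linarith [hx.1]⟩]
  ring

theorem mlin_eq_sum_of_mem_Ico {d : ℕ} {H : (Fin d → ℝ) → ℝ}
    (hH : ∀ y, H y = H fun j => ⌊y j⌋) {k : Fin d → ℤ} {x : Fin d → ℝ}
    (hx : ∀ j, x j ∈ Set.Ico ((k j : ℝ) - 1) (k j)) :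
    mlin d H x = ∑ S : Finset (Fin d), H (fun j => if j ∈ S then (k j : ℝ) else k j - 1)
      * ∏ j, (if j ∈ S then x j - (k j - 1) else k j - x j) := by
  classical
  set g : Finset (Fin d) → Fin d → ℝ → ℝ := fun S j t =>
    if (k j : ℝ) - x j ≤ t then (if j ∈ S then 1 else 0) else (if j ∈ S then 0 else 1)
  have hpt : ∀ u ∈ Set.Icc (0 : Fin d → ℝ) 1,
      H (x + u) = ∑ S : Finset (Fin d),
        H (fun j => if j ∈ S then (k j : ℝ) else k j - 1) * ∏ j, g S j (u j) := by
    intro u hu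
    simp only [g, prod_ite_mem_eq_ite_eq, mul_ite, mul_one, mul_zero, Finset.sum_ite_eq',
      Finset.mem_univ, if_true, Finset.mem_filter, true_and]
    rw [hH]
    congr 1
    funext j
    exact floor_add_eq_ite (hx j) ⟨hu.1 j, hu.2 j⟩
  have hint : ∀ S j, ∫ t in Set.Icc (0 : ℝ) 1, g S j t
      = if j ∈ S then x j - (k j - 1) else k j - x j := fun S j => by
    rw [integral_Icc_ite_le ⟨by linarith [(hx j).2], by linarith [(hx j).1]⟩]
    split_ifs <;> ring
  rw [mlin, setIntegral_congr_fun measurableSet_Icc hpt, volume_restrict_Icc_pi,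
    integral_finsetSum _ fun S _ =>
      (Integrable.fintype_prod fun j => integrable_ite_le _ _ _).const_mul _]
  refine Finset.sum_congr rfl fun S _ => ?_
  rw [integral_const_mul, integral_fintype_prod_eq_prod (g S)]
  simp only [Pi.zero_apply, Pi.one_apply, hint]

theorem genInv_eq_of_isLeast {f : ℝ → ℝ} {w x : ℝ} (hw : w ≠ 0)
    (h : IsLeast {y | w ≤ f y} x) : genInv f w = x := by
  rw [genInv, if_neg hw]
  exact h.csInf_eq

theorem mlin1_mono {G : ℝ → ℝ} (hG : Monotone G) : Monotone (mlin1 G) := by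
  intro x y hxy
  have hint : ∀ a, IntegrableOn (fun t => G (a + t)) (Set.Icc 0 1) := fun a =>
    MonotoneOn.integrableOn_isCompact isCompact_Icc fun s _ t _ hst => hG (by linarith)
  exact setIntegral_mono_on (hint x) (hint y) measurableSet_Icc fun t _ => hG (by linarith)

theorem genInv_mlin1_eq_of_mem_Ioo {G : ℝ → ℝ} (hG : ∀ y, G y = G ⌊y⌋) (hmono : Monotone G) {k : ℤ}
    (hG0 : 0 ≤ G (k - 1)) {w : ℝ} (hw : w ∈ Set.Ioo (G (k - 1)) (G k)) :
    genInv (mlin1 G) w = k - 1 + (w - G (k - 1)) / (G k - G (k - 1)) := by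
  obtain ⟨hw1, hw2⟩ := hw
  have hΔ : 0 < G k - G (k - 1) := by linarith
  set r := (w - G (k - 1)) / (G k - G (k - 1))
  have hr0 : 0 < r := div_pos (by linarith) hΔ
  have hr1 : r < 1 := (div_lt_one hΔ).2 (by linarith)
  have hrΔ : r * (G k - G (k - 1)) = w - G (k - 1) := div_mul_cancel₀ _ hΔ.ne'
  have hval : ∀ y ∈ Set.Ico ((k : ℝ) - 1) k,
      mlin1 G y - w = (y - (k - 1 + r)) * (G k - G (k - 1)) := fun y hy => by
    rw [mlin1_eq_of_mem_Ico hG hy]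
    linear_combination hrΔ
  refine genInv_eq_of_isLeast (by linarith) ⟨?_, fun y (hy : w ≤ mlin1 G y) => ?_⟩
  · show w ≤ mlin1 G (k - 1 + r)
    linarith [hval (k - 1 + r) ⟨by linarith, by linarith⟩]
  · by_contra hlt
    rw [not_le] at hlt
    -- left of the cell, monotonicity of `mlin1 G` reduces to the cell's left endpoint
    set z := max y (k - 1)
    have hz : z ∈ Set.Ico ((k : ℝ) - 1) k :=
      ⟨le_max_right _ _, max_lt (by linarith) (by linarith)⟩
    have hzr : z - (k - 1 + r) < 0 :=
      sub_neg.2 (max_lt hlt (by linarith : (k : ℝ) - 1 < k - 1 + r))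
    have hyz : mlin1 G y ≤ mlin1 G z := mlin1_mono hmono (le_max_left _ _)
    linarith [hval z hz, mul_neg_of_neg_of_pos hzr hΔ]

def cellWeight {d : ℕ} (F : Fin d → ℝ → ℝ) (k : Fin d → ℕ) (S : Finset (Fin d)) (j : Fin d)
    (t : ℝ) : ℝ :=
  if j ∈ S then (t - F j ((k j : ℝ) - 1)) / (F j (k j) - F j ((k j : ℝ) - 1))
  else (F j (k j) - t) / (F j (k j) - F j ((k j : ℝ) - 1))

def cellCopula (d : ℕ) (H : (Fin d → ℝ) → ℝ) (F : Fin d → ℝ → ℝ) (k : Fin d → ℕ)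
    (w : Fin d → ℝ) : ℝ :=
  ∑ S : Finset (Fin d), H (fun j => if j ∈ S then (k j : ℝ) else (k j : ℝ) - 1)
    * ∏ j, cellWeight F k S j (w j)

theorem prod_cellWeight_update {d : ℕ} (F : Fin d → ℝ → ℝ) (k : Fin d → ℕ)
    (S : Finset (Fin d)) (w : Fin d → ℝ) (m : Fin d) (c : ℝ) :
    ∏ j, cellWeight F k S j (Function.update w m c j)
      = cellWeight F k S m c
        * ((∏ ℓ ∈ Finset.univ.filter (fun ℓ => ℓ ∉ S ∧ ℓ ≠ m),
            (F ℓ (k ℓ) - w ℓ) / (F ℓ (k ℓ) - F ℓ ((k ℓ : ℝ) - 1)))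
          * ∏ ℓ ∈ S.filter (fun ℓ => ℓ ≠ m),
            (w ℓ - F ℓ ((k ℓ : ℝ) - 1)) / (F ℓ (k ℓ) - F ℓ ((k ℓ : ℝ) - 1))) := by
  classical
  simp only [Function.apply_update (fun j => cellWeight F k S j),
    Finset.prod_update_of_mem (Finset.mem_univ m)]
  congr 1
  simp only [cellWeight]
  rw [Finset.prod_ite, mul_comm]
  congr 1 <;> (apply Finset.prod_congr ?_ fun _ _ => rfl; ext ℓ; simp [and_comm])

theorem cellWeight_sub {d : ℕ} (F : Fin d → ℝ → ℝ) (k : Fin d → ℕ) (S : Finset (Fin d)) (m : Fin d)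
    (a b : ℝ) :
    cellWeight F k S m b - cellWeight F k S m a
      = (b - a) * ((-1 : ℝ) ^ ((1 : ℕ) - if m ∈ S then 1 else 0)
          / (F m (k m) - F m ((k m : ℝ) - 1))) := by
  by_cases h : m ∈ S <;> simp only [cellWeight, h, if_true, if_false] <;> ring

theorem cellCopula_update_sub {d : ℕ} (H : (Fin d → ℝ) → ℝ) (F : Fin d → ℝ → ℝ)
    (k : Fin d → ℕ) (m : Fin d) (w : Fin d → ℝ) (a b : ℝ) :
    cellCopula d H F k (Function.update w m b) - cellCopula d H F k (Function.update w m a)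
      = (b - a) * Cdot d H F k m w := by
  simp only [cellCopula, Cdot, ← Finset.sum_sub_distrib, Finset.mul_sum]
  refine Finset.sum_congr rfl fun S _ => ?_
  rw [← mul_sub, prod_cellWeight_update, prod_cellWeight_update, ← sub_mul, cellWeight_sub]
  ring

theorem mlinCopula_eq_cellCopula {d : ℕ} {H : (Fin d → ℝ) → ℝ} {F : Fin d → ℝ → ℝ}
    (hH : ∀ y, H y = H fun j => ⌊y j⌋) (hF : ∀ j y, F j y = F j ⌊y⌋)
    (hmono : ∀ j, Monotone (F j)) {k : Fin d → ℕ} (hF0 : ∀ j, 0 ≤ F j ((k j : ℝ) - 1))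
    {w : Fin d → ℝ} (hw : ∀ j, w j ∈ Set.Ioo (F j ((k j : ℝ) - 1)) (F j (k j))) :
    mlinCopula d H F w = cellCopula d H F k w := by
  set r : Fin d → ℝ := fun j => (w j - F j ((k j : ℝ) - 1)) / (F j (k j) - F j ((k j : ℝ) - 1))
  have hΔ : ∀ j, 0 < F j (k j) - F j ((k j : ℝ) - 1) := fun j => by linarith [(hw j).1, (hw j).2]
  have hr : ∀ j, r j ∈ Set.Ioo 0 1 := fun j =>
    ⟨div_pos (by linarith [(hw j).1]) (hΔ j), (div_lt_one (hΔ j)).2 (by linarith [(hw j).2])⟩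
  have hinv : ∀ j, genInv (mlin1 (F j)) (w j) = k j - 1 + r j := fun j => by
    simpa using genInv_mlin1_eq_of_mem_Ioo (hF j) (hmono j) (k := k j) (by simpa using hF0 j)
      (by simpa using hw j)
  rw [mlinCopula, funext hinv, mlin_eq_sum_of_mem_Ico hH (k := fun j => k j)
    fun j => ⟨by push_cast; linarith [(hr j).1], by push_cast; linarith [(hr j).2]⟩]
  refine Finset.sum_congr rfl fun S _ => ?_
  simp only [Int.cast_natCast]
  congr 1
  refine Finset.prod_congr rfl fun j _ => ?_
  simp only [cellWeight, r]
  split_ifs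
  · ring
  · field_simp [(hΔ j).ne']
    ring

theorem sub_eq_sum_update_sub {α M : Type*} [AddCommGroup M] {d : ℕ} (f : (Fin d → α) → M)
    (u v : Fin d → α) :
    f v - f u = ∑ m : Fin d,
      (f (Function.update (fun j => if j < m then u j else v j) m (v m))
        - f (Function.update (fun j => if j < m then u j else v j) m (u m))) := by
  set W : ℕ → Fin d → α := fun i j => if (j : ℕ) < i then u j else v j
  have hW0 : W 0 = v := by funext j; simp [W]
  have hWd : W d = u := by funext j; simp [W, j.isLt]
  have hW : ∀ (m : Fin d) (i : ℕ), i = m ∨ i = m + 1 →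
      W i = Function.update (fun j => if j < m then u j else v j) m (W i m) := by
    intro m i hi
    funext j
    rcases eq_or_ne j m with rfl | hj
    · simp
    · have hji : (j : ℕ) < i ↔ (j : ℕ) < m := by have := Fin.val_ne_of_ne hj; omega
      simp only [Function.update_of_ne hj, W, Fin.lt_def, hji]
  calc f v - f u = ∑ i ∈ Finset.range d, (f (W i) - f (W (i + 1))) := by
        rw [Finset.sum_range_sub' (fun i => f (W i)), hW0, hWd]
    _ = ∑ m : Fin d, (f (W m) - f (W (m + 1))) :=
        (Fin.sum_univ_eq_sum_range (fun i => f (W i) - f (W (i + 1))) d).symm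
    _ = _ := Finset.sum_congr rfl fun m _ => by
        rw [hW m m (Or.inl rfl), hW m (m + 1) (Or.inr rfl)]
        simp [W]

theorem mlinCopula_increment_formula_general
    {Ω : Type*} [MeasurableSpace Ω] (P : Measure Ω) [IsProbabilityMeasure P]
    (d : ℕ) (X : Ω → Fin d → ℝ)
    (hNat : ∀ ω j, ∃ k : ℕ, X ω j = k)
    (H : (Fin d → ℝ) → ℝ) (F : Fin d → ℝ → ℝ)
    (hH : ∀ x, H x = (P {ω | ∀ j, X ω j ≤ x j}).toReal)
    (hF : ∀ j x, F j x = (P {ω | X ω j ≤ x}).toReal)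
    (k : Fin d → ℕ)
    (u v : Fin d → ℝ)
    (hu : ∀ j, u j ∈ Set.Ioo (F j ((k j : ℝ) - 1)) (F j (k j)))
    (hv : ∀ j, v j ∈ Set.Ioo (F j ((k j : ℝ) - 1)) (F j (k j))) :
    mlinCopula d H F v - mlinCopula d H F u
      = ∑ m : Fin d, (v m - u m) * Cdot d H F k m (fun j => if j < m then u j else v j) := by
  have hle_floor : ∀ ω j y, X ω j ≤ ⌊y⌋ ↔ X ω j ≤ y := fun ω j y => by
    obtain ⟨n, hn⟩ := hNat ω j
    rw [hn, natCast_le_floor_iff]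
  have hHfloor : ∀ y, H y = H fun j => ⌊y j⌋ := fun y => by
    simp only [hH, hle_floor]
  have hFfloor : ∀ j y, F j y = F j ⌊y⌋ := fun j y => by
    simp only [hF, hle_floor]
  have hmono : ∀ j, Monotone (F j) := fun j x y hxy => by
    simp only [hF]
    exact ENNReal.toReal_mono (measure_ne_top _ _) (measure_mono fun ω h => h.trans hxy)
  have hF0 : ∀ j, 0 ≤ F j ((k j : ℝ) - 1) := fun j => by
    rw [hF]
    exact ENNReal.toReal_nonneg
  rw [mlinCopula_eq_cellCopula hHfloor hFfloor hmono hF0 hv,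
    mlinCopula_eq_cellCopula hHfloor hFfloor hmono hF0 hu, sub_eq_sum_update_sub]
  simp only [cellCopula_update_sub]

/-- Lemma B.4: on an open cell of `[0,1]^d`, the increment of the
multilinear extension copula is the telescoping sum
`C^⊞(v) − C^⊞(u) = ∑_m (v_m − u_m) Ċ_m^⊞(w_{m1},…,w_{md})`, with `w_{mj} = u_j` for `j < m`
and `w_{mj} = v_j` for `j ≥ m`. -/
theorem mlinCopula_increment_formula
    {Ω : Type*} [MeasurableSpace Ω] (P : Measure Ω) [IsProbabilityMeasure P]
    (d : ℕ) (hd : 1 ≤ d) (X : Ω → Fin d → ℝ) (hX : Measurable X)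
    (hNat : ∀ ω j, ∃ k : ℕ, X ω j = k)
    (H : (Fin d → ℝ) → ℝ) (F : Fin d → ℝ → ℝ)
    (hH : ∀ x, H x = (P {ω | ∀ j, X ω j ≤ x j}).toReal)
    (hF : ∀ j x, F j x = (P {ω | X ω j ≤ x}).toReal)
    (k : Fin d → ℕ) (hjump : ∀ j, 0 < F j (k j) - F j ((k j : ℝ) - 1))
    (u v : Fin d → ℝ)
    (hu : ∀ j, u j ∈ Set.Ioo (F j ((k j : ℝ) - 1)) (F j (k j)))
    (hv : ∀ j, v j ∈ Set.Ioo (F j ((k j : ℝ) - 1)) (F j (k j))) :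
    mlinCopula d H F v - mlinCopula d H F u
      = ∑ m : Fin d, (v m - u m) * Cdot d H F k m (fun j => if j < m then u j else v j) :=
  mlinCopula_increment_formula_general P d X hNat H F hH hF k u v hu hv
end
end
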